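/- arXiv:2305.11160 — 3 statements merged into one kernel-verified Lean document; each statement's English description precedes it below -/
import Mathlib

section
/- Suppose f : ℝ → ℝ is smooth with f'' nowhere zero, a, b ∈ ℝ are nonzero, and χ(x,t,y₁,…,y_n) is smooth. Then χ satisfies χ_{xt} + f'(u)·χ_{tt} − a·χ_{ttt} + b·Δ_y χ = 0 for all u if and only if χ = φ₀ + t·φ₁ where φ₀, φ₁ are smooth functions of (x, y₁,…,y_n) satisfying Δ_y φ₁ = 0 and Δ_y φ₀ = −(φ₁)_x / b. -/
/-- Partial derivative in the first (x) variable. -/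
noncomputable def pdX {n : ℕ} (F : ℝ → ℝ → (Fin n → ℝ) → ℝ) : ℝ → ℝ → (Fin n → ℝ) → ℝ :=
  fun x t y => deriv (fun s => F s t y) x

/-- Partial derivative in the second (t) variable. -/
noncomputable def pdT {n : ℕ} (F : ℝ → ℝ → (Fin n → ℝ) → ℝ) : ℝ → ℝ → (Fin n → ℝ) → ℝ :=
  fun x t y => deriv (fun s => F x s y) t

/-- Partial derivative in the j-th y variable. -/
noncomputable def pdY {n : ℕ} (j : Fin n) (F : ℝ → ℝ → (Fin n → ℝ) → ℝ) :
    ℝ → ℝ → (Fin n → ℝ) → ℝ :=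
  fun x t y => deriv (fun s => F x t (Function.update y j s)) (y j)

/-- Laplacian in the y variables. -/
noncomputable def lapY {n : ℕ} (F : ℝ → ℝ → (Fin n → ℝ) → ℝ) : ℝ → ℝ → (Fin n → ℝ) → ℝ :=
  fun x t y => ∑ j : Fin n, pdY j (pdY j F) x t y

/-- Smoothness of a function of (x, t, y). -/
def Smooth3 {n : ℕ} (F : ℝ → ℝ → (Fin n → ℝ) → ℝ) : Prop :=
  ContDiff ℝ (⊤ : ℕ∞) (fun p : ℝ × ℝ × (Fin n → ℝ) => F p.1 p.2.1 p.2.2)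

/-- Partial derivative in x of a function of (x, y). -/
noncomputable def pdX2 {n : ℕ} (F : ℝ → (Fin n → ℝ) → ℝ) : ℝ → (Fin n → ℝ) → ℝ :=
  fun x y => deriv (fun s => F s y) x

/-- Partial derivative in the j-th y variable of a function of (x, y). -/
noncomputable def pdY2 {n : ℕ} (j : Fin n) (F : ℝ → (Fin n → ℝ) → ℝ) : ℝ → (Fin n → ℝ) → ℝ :=
  fun x y => deriv (fun s => F x (Function.update y j s)) (y j)

/-- Laplacian in the y variables of a function of (x, y). -/
noncomputable def lapY2 {n : ℕ} (F : ℝ → (Fin n → ℝ) → ℝ) : ℝ → (Fin n → ℝ) → ℝ :=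
  fun x y => ∑ j : Fin n, pdY2 j (pdY2 j F) x y

/-- Smoothness of a function of (x, y). -/
def Smooth2 {n : ℕ} (F : ℝ → (Fin n → ℝ) → ℝ) : Prop :=
  ContDiff ℝ (⊤ : ℕ∞) (fun p : ℝ × (Fin n → ℝ) => F p.1 p.2)

section Aux
variable {n : ℕ}

private def U2 (F : ℝ → (Fin n → ℝ) → ℝ) : ℝ × (Fin n → ℝ) → ℝ := fun p => F p.1 p.2
private def U3 (F : ℝ → ℝ → (Fin n → ℝ) → ℝ) : ℝ × ℝ × (Fin n → ℝ) → ℝ :=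
  fun p => F p.1 p.2.1 p.2.2

private lemma hasDerivAt_X2' {F : ℝ → (Fin n → ℝ) → ℝ} (h : Smooth2 F) (x : ℝ)
    (y : Fin n → ℝ) : HasDerivAt (fun s => F s y) (fderiv ℝ (U2 F) (x, y) (1, 0)) x := by
  have H := ((h.differentiable (by simp) (x, y)).hasFDerivAt).comp_hasDerivAt x
    ((hasDerivAt_id x).prodMk (hasDerivAt_const x y))
  exact H

private lemma pdX2_eq {F : ℝ → (Fin n → ℝ) → ℝ} (h : Smooth2 F) (x : ℝ) (y : Fin n → ℝ) :
    pdX2 F x y = fderiv ℝ (U2 F) (x, y) (1, 0) := (hasDerivAt_X2' h x y).deriv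

private lemma hasDerivAt_sliceX2 {F : ℝ → (Fin n → ℝ) → ℝ} (h : Smooth2 F) (x : ℝ)
    (y : Fin n → ℝ) : HasDerivAt (fun s => F s y) (pdX2 F x y) x := by
  rw [pdX2_eq h]; exact hasDerivAt_X2' h x y

private lemma hasDerivAt_Y2' {F : ℝ → (Fin n → ℝ) → ℝ} (h : Smooth2 F) (j : Fin n) (x : ℝ)
    (y : Fin n → ℝ) : HasDerivAt (fun s => F x (Function.update y j s))
      (fderiv ℝ (U2 F) (x, y) (0, Pi.single j 1)) (y j) := by
  have H := ((h.differentiable (by simp) (x, Function.update y j (y j))).hasFDerivAt).comp_hasDerivAt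
    (y j) ((hasDerivAt_const (y j) x).prodMk (hasDerivAt_update y j (y j)))
  simp only [Function.update_eq_self] at H
  exact H

private lemma pdY2_eq {F : ℝ → (Fin n → ℝ) → ℝ} (h : Smooth2 F) (j : Fin n) (x : ℝ)
    (y : Fin n → ℝ) : pdY2 j F x y = fderiv ℝ (U2 F) (x, y) (0, Pi.single j 1) :=
  (hasDerivAt_Y2' h j x y).deriv

private lemma hasDerivAt_sliceY2 {F : ℝ → (Fin n → ℝ) → ℝ} (h : Smooth2 F) (j : Fin n) (x : ℝ)
    (y : Fin n → ℝ) :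
    HasDerivAt (fun s => F x (Function.update y j s)) (pdY2 j F x y) (y j) := by
  rw [pdY2_eq h]; exact hasDerivAt_Y2' h j x y

private lemma smooth2_pdX2 {F : ℝ → (Fin n → ℝ) → ℝ} (h : Smooth2 F) : Smooth2 (pdX2 F) := by
  have hc : ContDiff ℝ (⊤ : ℕ∞) (fun p : ℝ × (Fin n → ℝ) => fderiv ℝ (U2 F) p (1, 0)) :=
    (h.fderiv_right (by simp)).clm_apply contDiff_const
  unfold Smooth2
  rw [show (fun p : ℝ × (Fin n → ℝ) => pdX2 F p.1 p.2)
      = fun p => fderiv ℝ (U2 F) p (1, 0) from funext fun p => pdX2_eq h p.1 p.2]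
  exact hc

private lemma smooth2_pdY2 {F : ℝ → (Fin n → ℝ) → ℝ} (h : Smooth2 F) (j : Fin n) :
    Smooth2 (pdY2 j F) := by
  have hc : ContDiff ℝ (⊤ : ℕ∞) (fun p : ℝ × (Fin n → ℝ) => fderiv ℝ (U2 F) p (0, Pi.single j 1)) :=
    (h.fderiv_right (by simp)).clm_apply contDiff_const
  unfold Smooth2
  rw [show (fun p : ℝ × (Fin n → ℝ) => pdY2 j F p.1 p.2)
      = fun p => fderiv ℝ (U2 F) p (0, Pi.single j 1) from funext fun p => pdY2_eq h j p.1 p.2]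
  exact hc

private lemma hasDerivAt_T3' {F : ℝ → ℝ → (Fin n → ℝ) → ℝ} (h : Smooth3 F) (x t : ℝ)
    (y : Fin n → ℝ) :
    HasDerivAt (fun s => F x s y) (fderiv ℝ (U3 F) (x, t, y) (0, 1, 0)) t := by
  have H := ((h.differentiable (by simp) (x, t, y)).hasFDerivAt).comp_hasDerivAt t
    ((hasDerivAt_const t x).prodMk ((hasDerivAt_id t).prodMk (hasDerivAt_const t y)))
  exact H

private lemma pdT_eq {F : ℝ → ℝ → (Fin n → ℝ) → ℝ} (h : Smooth3 F) (x t : ℝ)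
    (y : Fin n → ℝ) : pdT F x t y = fderiv ℝ (U3 F) (x, t, y) (0, 1, 0) :=
  (hasDerivAt_T3' h x t y).deriv

private lemma hasDerivAt_sliceT3 {F : ℝ → ℝ → (Fin n → ℝ) → ℝ} (h : Smooth3 F) (x t : ℝ)
    (y : Fin n → ℝ) : HasDerivAt (fun s => F x s y) (pdT F x t y) t := by
  rw [pdT_eq h]; exact hasDerivAt_T3' h x t y

private lemma smooth3_pdT {F : ℝ → ℝ → (Fin n → ℝ) → ℝ} (h : Smooth3 F) : Smooth3 (pdT F) := by
  have hc : ContDiff ℝ (⊤ : ℕ∞) (fun p : ℝ × ℝ × (Fin n → ℝ) => fderiv ℝ (U3 F) p (0, 1, 0)) :=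
    (h.fderiv_right (by simp)).clm_apply contDiff_const
  unfold Smooth3
  rw [show (fun p : ℝ × ℝ × (Fin n → ℝ) => pdT F p.1 p.2.1 p.2.2)
      = fun p => fderiv ℝ (U3 F) p (0, 1, 0) from funext fun p => pdT_eq h p.1 p.2.1 p.2.2]
  exact hc

private lemma smooth2_slice {F : ℝ → ℝ → (Fin n → ℝ) → ℝ} (h : Smooth3 F) (t₀ : ℝ) :
    Smooth2 (fun x y => F x t₀ y) :=
  h.comp (contDiff_fst.prodMk (contDiff_const.prodMk contDiff_snd))


variable {n : ℕ}


section Key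
variable {φ₀ φ₁ : ℝ → (Fin n → ℝ) → ℝ} (h₀ : Smooth2 φ₀) (h₁ : Smooth2 φ₁)
  {χ : ℝ → ℝ → (Fin n → ℝ) → ℝ} (hrep : ∀ x t y, χ x t y = φ₀ x y + t * φ₁ x y)

include hrep in
private lemma kT : ∀ x t y, pdT χ x t y = φ₁ x y := by
  intro x t y
  have : (fun s => χ x s y) = fun s => φ₀ x y + s * φ₁ x y := funext fun s => hrep x s y
  unfold pdT
  rw [this]
  simpa using (((hasDerivAt_id t).mul_const (φ₁ x y)).const_add (φ₀ x y)).deriv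

include hrep in
private lemma kTT : ∀ x t y, pdT (pdT χ) x t y = 0 := by
  intro x t y
  have : (fun s => pdT χ x s y) = fun _ => φ₁ x y := funext fun s => kT hrep x s y
  show deriv (fun s => pdT χ x s y) t = 0
  rw [this, deriv_const]

include hrep in
private lemma kTTT : ∀ x t y, pdT (pdT (pdT χ)) x t y = 0 := by
  intro x t y
  have : (fun s => pdT (pdT χ) x s y) = fun _ => (0 : ℝ) := funext fun s => kTT hrep x s y
  show deriv (fun s => pdT (pdT χ) x s y) t = 0
  rw [this, deriv_const]

include h₀ h₁ hrep in
private lemma kX : ∀ x t y, pdX χ x t y = pdX2 φ₀ x y + t * pdX2 φ₁ x y := by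
  intro x t y
  have e : (fun s => χ s t y) = fun s => φ₀ s y + t * φ₁ s y := funext fun s => hrep s t y
  unfold pdX
  rw [e]
  exact ((hasDerivAt_sliceX2 h₀ x y).add ((hasDerivAt_sliceX2 h₁ x y).const_mul t)).deriv

include h₀ h₁ hrep in
private lemma kTX : ∀ x t y, pdT (pdX χ) x t y = pdX2 φ₁ x y := by
  intro x t y
  have e : (fun s => pdX χ x s y) = fun s => pdX2 φ₀ x y + s * pdX2 φ₁ x y :=
    funext fun s => kX h₀ h₁ hrep x s y
  show deriv (fun s => pdX χ x s y) t = _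
  rw [e]
  simpa using (((hasDerivAt_id t).mul_const (pdX2 φ₁ x y)).const_add (pdX2 φ₀ x y)).deriv

include h₀ h₁ hrep in
private lemma kY (j : Fin n) : ∀ x t y, pdY j χ x t y = pdY2 j φ₀ x y + t * pdY2 j φ₁ x y := by
  intro x t y
  have e : (fun s => χ x t (Function.update y j s))
      = fun s => φ₀ x (Function.update y j s) + t * φ₁ x (Function.update y j s) :=
    funext fun s => hrep x t _
  unfold pdY
  rw [e]
  exact ((hasDerivAt_sliceY2 h₀ j x y).add ((hasDerivAt_sliceY2 h₁ j x y).const_mul t)).deriv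

include h₀ h₁ hrep in
private lemma kYY (j : Fin n) : ∀ x t y, pdY j (pdY j χ) x t y
    = pdY2 j (pdY2 j φ₀) x y + t * pdY2 j (pdY2 j φ₁) x y := by
  intro x t y
  have e : (fun s => pdY j χ x t (Function.update y j s))
      = fun s => pdY2 j φ₀ x (Function.update y j s) + t * pdY2 j φ₁ x (Function.update y j s) :=
    funext fun s => kY h₀ h₁ hrep j x t _
  show deriv (fun s => pdY j χ x t (Function.update y j s)) (y j) = _
  rw [e]
  exact ((hasDerivAt_sliceY2 (smooth2_pdY2 h₀ j) j x y).add
    ((hasDerivAt_sliceY2 (smooth2_pdY2 h₁ j) j x y).const_mul t)).deriv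

include h₀ h₁ hrep in
private lemma kLap : ∀ x t y, lapY χ x t y = lapY2 φ₀ x y + t * lapY2 φ₁ x y := by
  intro x t y
  unfold lapY lapY2
  rw [Finset.mul_sum, ← Finset.sum_add_distrib]
  exact Finset.sum_congr rfl fun j _ => kYY h₀ h₁ hrep j x t y

end Key

theorem stmt_4 {n : ℕ} (f : ℝ → ℝ) (hf : ContDiff ℝ (⊤ : ℕ∞) f)
    (hf'' : ∀ u : ℝ, deriv (deriv f) u ≠ 0)
    (a b : ℝ) (ha : a ≠ 0) (hb : b ≠ 0)
    (χ : ℝ → ℝ → (Fin n → ℝ) → ℝ) (hχ : Smooth3 χ) :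
    (∀ (u : ℝ) (x t : ℝ) (y : Fin n → ℝ),
        pdT (pdX χ) x t y + deriv f u * pdT (pdT χ) x t y
          - a * pdT (pdT (pdT χ)) x t y + b * lapY χ x t y = 0)
      ↔ ∃ φ₀ φ₁ : ℝ → (Fin n → ℝ) → ℝ, Smooth2 φ₀ ∧ Smooth2 φ₁ ∧
          (∀ x y, lapY2 φ₁ x y = 0) ∧
          (∀ x y, lapY2 φ₀ x y = -(pdX2 φ₁ x y) / b) ∧
          (∀ x t y, χ x t y = φ₀ x y + t * φ₁ x y) := by
  constructor
  · intro H
    have hex : ∃ u₀ u₁ : ℝ, deriv f u₀ ≠ deriv f u₁ := by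
      by_contra hcon
      push_neg at hcon
      have hconst : deriv f = fun _ => deriv f 0 := funext fun u => hcon u 0
      have h1 := hf'' 1
      rw [hconst] at h1
      simp at h1
    obtain ⟨u₀, u₁, hne⟩ := hex
    have hTT : ∀ x t y, pdT (pdT χ) x t y = 0 := by
      intro x t y
      have h0 := H u₀ x t y
      have h1 := H u₁ x t y
      have h2 : (deriv f u₀ - deriv f u₁) * pdT (pdT χ) x t y = 0 := by
        linear_combination h0 - h1
      rcases mul_eq_zero.mp h2 with h | h
      · exact absurd (sub_eq_zero.mp h) hne
      · exact h
    set φ₀ : ℝ → (Fin n → ℝ) → ℝ := fun x y => χ x 0 y with hφ₀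
    set φ₁ : ℝ → (Fin n → ℝ) → ℝ := fun x y => pdT χ x 0 y with hφ₁
    have hχT := smooth3_pdT hχ
    have h₀ : Smooth2 φ₀ := smooth2_slice hχ 0
    have h₁ : Smooth2 φ₁ := smooth2_slice hχT 0
    have hTconst : ∀ x t y, pdT χ x t y = φ₁ x y := by
      intro x t y
      have hd : ∀ s, HasDerivAt (fun s' => pdT χ x s' y) 0 s := by
        intro s
        have h3 := hasDerivAt_sliceT3 hχT x s y
        rwa [hTT x s y] at h3
      exact is_const_of_deriv_eq_zero (f := fun s => pdT χ x s y)
        (fun s => (hd s).differentiableAt) (fun s => (hd s).deriv) t 0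
    have hrep : ∀ x t y, χ x t y = φ₀ x y + t * φ₁ x y := by
      intro x t y
      have hd : ∀ s, HasDerivAt (fun s' => χ x s' y - s' * φ₁ x y) 0 s := by
        intro s
        have h3 := hasDerivAt_sliceT3 hχ x s y
        rw [hTconst x s y] at h3
        have h4 := h3.sub ((hasDerivAt_id s).mul_const (φ₁ x y))
        simp only [id_eq, one_mul, sub_self] at h4
        exact h4
      have hc := is_const_of_deriv_eq_zero (f := fun s => χ x s y - s * φ₁ x y)
        (fun s => (hd s).differentiableAt) (fun s => (hd s).deriv) t 0
      simp only [zero_mul, sub_zero] at hc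
      rw [hφ₀]
      linarith
    refine ⟨φ₀, φ₁, h₀, h₁, ?_, ?_, hrep⟩
    · intro x y
      have e0 := H u₀ x 0 y
      have e1 := H u₀ x 1 y
      rw [kTX h₀ h₁ hrep, kTT hrep, kTTT hrep, kLap h₀ h₁ hrep] at e0 e1
      have h3 : b * lapY2 φ₁ x y = 0 := by linear_combination e1 - e0
      exact (mul_eq_zero.mp h3).resolve_left hb
    · intro x y
      have e0 := H u₀ x 0 y
      have e1 := H u₀ x 1 y
      rw [kTX h₀ h₁ hrep, kTT hrep, kTTT hrep, kLap h₀ h₁ hrep] at e0 e1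
      have h3 : b * lapY2 φ₁ x y = 0 := by linear_combination e1 - e0
      field_simp
      linear_combination e0
  · rintro ⟨φ₀, φ₁, h₀, h₁, hl1, hl0, hrep⟩
    intro u x t y
    rw [kTX h₀ h₁ hrep, kTT hrep, kTTT hrep, kLap h₀ h₁ hrep, hl0, hl1]
    field_simp
    ring
end Aux
end

section
/- Let f : ℝ → ℝ be smooth, a, b ∈ ℝ, χ as in the previous context, and let u be a smooth solution of the GNPWE u_{tx} + (f(u))_{tt} + a u_{ttt} + b Δ_y u = 0. Then the density ρ = (u_x + f'(u)u_t + a u_{tt})χ − (a u_t + f(u))χ_t, flux σ = −u·χ_t, and fluxes ζⱼ = b(u_{yⱼ}χ − u·χ_{yⱼ}) satisfy ρ_t + σ_x + Σⱼ (ζⱼ)_{yⱼ} = 0 identically. -/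
namespace Aux
variable {n : ℕ}

noncomputable def unc3 (F : ℝ → ℝ → (Fin n → ℝ) → ℝ) : ℝ × ℝ × (Fin n → ℝ) → ℝ :=
  fun p => F p.1 p.2.1 p.2.2
noncomputable def unc2 (F : ℝ → (Fin n → ℝ) → ℝ) : ℝ × (Fin n → ℝ) → ℝ :=
  fun p => F p.1 p.2

lemma lineX (t : ℝ) (y : Fin n → ℝ) (x : ℝ) :
    HasDerivAt (fun s : ℝ => ((s, t, y) : ℝ × ℝ × (Fin n → ℝ))) (1, 0, 0) x :=
  HasDerivAt.prodMk (hasDerivAt_id x) (hasDerivAt_const x (t, y))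

lemma lineT (x : ℝ) (y : Fin n → ℝ) (t : ℝ) :
    HasDerivAt (fun s : ℝ => ((x, s, y) : ℝ × ℝ × (Fin n → ℝ))) (0, 1, 0) t :=
  HasDerivAt.prodMk (hasDerivAt_const t x) (HasDerivAt.prodMk (hasDerivAt_id t) (hasDerivAt_const t y))

lemma lineY (x t : ℝ) (y : Fin n → ℝ) (j : Fin n) :
    HasDerivAt (fun s : ℝ => ((x, t, Function.update y j s) : ℝ × ℝ × (Fin n → ℝ)))
      (0, 0, Pi.single j 1) (y j) :=
  HasDerivAt.prodMk (hasDerivAt_const _ x) (HasDerivAt.prodMk (hasDerivAt_const _ t) (hasDerivAt_update y j (y j)))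

lemma hasDerivAt_X {F : ℝ → ℝ → (Fin n → ℝ) → ℝ} (hF : Smooth3 F) (x t : ℝ) (y : Fin n → ℝ) :
    HasDerivAt (fun s => F s t y) (fderiv ℝ (unc3 F) (x, t, y) (1, 0, 0)) x :=
  by have h := ((hF.differentiable (by simp) (x, t, y)).hasFDerivAt).comp_hasDerivAt x (lineX t y x); exact h

lemma hasDerivAt_T {F : ℝ → ℝ → (Fin n → ℝ) → ℝ} (hF : Smooth3 F) (x t : ℝ) (y : Fin n → ℝ) :
    HasDerivAt (fun s => F x s y) (fderiv ℝ (unc3 F) (x, t, y) (0, 1, 0)) t :=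
  by have h := ((hF.differentiable (by simp) (x, t, y)).hasFDerivAt).comp_hasDerivAt t (lineT x y t); exact h

lemma hasDerivAt_Y {F : ℝ → ℝ → (Fin n → ℝ) → ℝ} (hF : Smooth3 F) (j : Fin n) (x t : ℝ)
    (y : Fin n → ℝ) :
    HasDerivAt (fun s => F x t (Function.update y j s))
      (fderiv ℝ (unc3 F) (x, t, y) (0, 0, Pi.single j 1)) (y j) :=
  ((hF.differentiable (by simp) (x, t, y)).hasFDerivAt).comp_hasDerivAt_of_eq (y j) (lineY x t y j)
    (by simp)

lemma hasDerivAt_pdX {F : ℝ → ℝ → (Fin n → ℝ) → ℝ} (hF : Smooth3 F) (x t : ℝ) (y : Fin n → ℝ) :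
    HasDerivAt (fun s => F s t y) (pdX F x t y) x := by
  have h := hasDerivAt_X hF x t y
  have hd : pdX F x t y = fderiv ℝ (unc3 F) (x, t, y) (1, 0, 0) := h.deriv
  rw [hd]; exact h

lemma hasDerivAt_pdT {F : ℝ → ℝ → (Fin n → ℝ) → ℝ} (hF : Smooth3 F) (x t : ℝ) (y : Fin n → ℝ) :
    HasDerivAt (fun s => F x s y) (pdT F x t y) t := by
  have h := hasDerivAt_T hF x t y
  have hd : pdT F x t y = fderiv ℝ (unc3 F) (x, t, y) (0, 1, 0) := h.deriv
  rw [hd]; exact h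

lemma hasDerivAt_pdY {F : ℝ → ℝ → (Fin n → ℝ) → ℝ} (hF : Smooth3 F) (j : Fin n) (x t : ℝ)
    (y : Fin n → ℝ) :
    HasDerivAt (fun s => F x t (Function.update y j s)) (pdY j F x t y) (y j) := by
  have h := hasDerivAt_Y hF j x t y
  have hd : pdY j F x t y = fderiv ℝ (unc3 F) (x, t, y) (0, 0, Pi.single j 1) := h.deriv
  rw [hd]; exact h

lemma smooth3_fderiv_apply {F : ℝ → ℝ → (Fin n → ℝ) → ℝ} (hF : Smooth3 F)
    (v : ℝ × ℝ × (Fin n → ℝ)) :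
    Smooth3 (fun x t y => fderiv ℝ (unc3 F) (x, t, y) v) :=
  (hF.fderiv_right (le_of_eq (by simp))).clm_apply contDiff_const

lemma smooth3_pdX {F : ℝ → ℝ → (Fin n → ℝ) → ℝ} (hF : Smooth3 F) : Smooth3 (pdX F) := by
  have : pdX F = fun x t y => fderiv ℝ (unc3 F) (x, t, y) (1, 0, 0) := by
    funext x t y; exact (hasDerivAt_X hF x t y).deriv
  rw [this]; exact smooth3_fderiv_apply hF _

lemma smooth3_pdT {F : ℝ → ℝ → (Fin n → ℝ) → ℝ} (hF : Smooth3 F) : Smooth3 (pdT F) := by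
  have : pdT F = fun x t y => fderiv ℝ (unc3 F) (x, t, y) (0, 1, 0) := by
    funext x t y; exact (hasDerivAt_T hF x t y).deriv
  rw [this]; exact smooth3_fderiv_apply hF _

lemma smooth3_pdY {F : ℝ → ℝ → (Fin n → ℝ) → ℝ} (hF : Smooth3 F) (j : Fin n) :
    Smooth3 (pdY j F) := by
  have : pdY j F = fun x t y => fderiv ℝ (unc3 F) (x, t, y) (0, 0, Pi.single j 1) := by
    funext x t y; exact (hasDerivAt_Y hF j x t y).deriv
  rw [this]; exact smooth3_fderiv_apply hF _

-- two-variable versions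
lemma lineX2 (y : Fin n → ℝ) (x : ℝ) :
    HasDerivAt (fun s : ℝ => ((s, y) : ℝ × (Fin n → ℝ))) (1, 0) x :=
  HasDerivAt.prodMk (hasDerivAt_id x) (hasDerivAt_const x y)

lemma lineY2 (x : ℝ) (y : Fin n → ℝ) (j : Fin n) :
    HasDerivAt (fun s : ℝ => ((x, Function.update y j s) : ℝ × (Fin n → ℝ)))
      (0, Pi.single j 1) (y j) :=
  HasDerivAt.prodMk (hasDerivAt_const _ x) (hasDerivAt_update y j (y j))

lemma hasDerivAt_X2 {F : ℝ → (Fin n → ℝ) → ℝ} (hF : Smooth2 F) (x : ℝ) (y : Fin n → ℝ) :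
    HasDerivAt (fun s => F s y) (fderiv ℝ (unc2 F) (x, y) (1, 0)) x :=
  by have h := ((hF.differentiable (by simp) (x, y)).hasFDerivAt).comp_hasDerivAt x (lineX2 y x); exact h

lemma hasDerivAt_Y2 {F : ℝ → (Fin n → ℝ) → ℝ} (hF : Smooth2 F) (j : Fin n) (x : ℝ)
    (y : Fin n → ℝ) :
    HasDerivAt (fun s => F x (Function.update y j s))
      (fderiv ℝ (unc2 F) (x, y) (0, Pi.single j 1)) (y j) :=
  ((hF.differentiable (by simp) (x, y)).hasFDerivAt).comp_hasDerivAt_of_eq (y j) (lineY2 x y j)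
    (by simp)

lemma hasDerivAt_pdX2 {F : ℝ → (Fin n → ℝ) → ℝ} (hF : Smooth2 F) (x : ℝ) (y : Fin n → ℝ) :
    HasDerivAt (fun s => F s y) (pdX2 F x y) x := by
  have h := hasDerivAt_X2 hF x y
  have hd : pdX2 F x y = fderiv ℝ (unc2 F) (x, y) (1, 0) := h.deriv
  rw [hd]; exact h

lemma hasDerivAt_pdY2 {F : ℝ → (Fin n → ℝ) → ℝ} (hF : Smooth2 F) (j : Fin n) (x : ℝ)
    (y : Fin n → ℝ) :
    HasDerivAt (fun s => F x (Function.update y j s)) (pdY2 j F x y) (y j) := by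
  have h := hasDerivAt_Y2 hF j x y
  have hd : pdY2 j F x y = fderiv ℝ (unc2 F) (x, y) (0, Pi.single j 1) := h.deriv
  rw [hd]; exact h

lemma smooth2_fderiv_apply {F : ℝ → (Fin n → ℝ) → ℝ} (hF : Smooth2 F)
    (v : ℝ × (Fin n → ℝ)) :
    Smooth2 (fun x y => fderiv ℝ (unc2 F) (x, y) v) :=
  (hF.fderiv_right (le_of_eq (by simp))).clm_apply contDiff_const

lemma smooth2_pdY2 {F : ℝ → (Fin n → ℝ) → ℝ} (hF : Smooth2 F) (j : Fin n) :
    Smooth2 (pdY2 j F) := by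
  have : pdY2 j F = fun x y => fderiv ℝ (unc2 F) (x, y) (0, Pi.single j 1) := by
    funext x y; exact (hasDerivAt_Y2 hF j x y).deriv
  rw [this]; exact smooth2_fderiv_apply hF _

lemma contDiff_deriv {g : ℝ → ℝ} (hg : ContDiff ℝ (⊤ : ℕ∞) g) : ContDiff ℝ (⊤ : ℕ∞) (deriv g) := by
  have : deriv g = fun x => fderiv ℝ g x 1 := by
    funext x; rfl
  rw [this]; exact (hg.fderiv_right (le_of_eq (by simp))).clm_apply contDiff_const

end Aux

theorem stmt_8 {n : ℕ} (f : ℝ → ℝ) (hf : ContDiff ℝ (⊤ : ℕ∞) f) (a b : ℝ)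
    (φ₀ φ₁ : ℝ → (Fin n → ℝ) → ℝ) (hφ₀ : Smooth2 φ₀) (hφ₁ : Smooth2 φ₁)
    (h₁ : ∀ x y, lapY2 φ₁ x y = 0)
    (h₀ : ∀ x y, b * lapY2 φ₀ x y + pdX2 φ₁ x y = 0)
    (χ : ℝ → ℝ → (Fin n → ℝ) → ℝ)
    (hχ : χ = fun x t y => φ₀ x y + t * φ₁ x y)
    (u : ℝ → ℝ → (Fin n → ℝ) → ℝ) (hu : Smooth3 u)
    (hsol : ∀ x t y, pdT (pdX u) x t y
        + deriv (deriv f) (u x t y) * (pdT u x t y) ^ 2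
        + deriv f (u x t y) * pdT (pdT u) x t y
        + a * pdT (pdT (pdT u)) x t y + b * lapY u x t y = 0)
    (ρ σ : ℝ → ℝ → (Fin n → ℝ) → ℝ) (ζ : Fin n → ℝ → ℝ → (Fin n → ℝ) → ℝ)
    (hρ : ρ = fun x t y =>
      (pdX u x t y + deriv f (u x t y) * pdT u x t y + a * pdT (pdT u) x t y) * χ x t y
        - (a * pdT u x t y + f (u x t y)) * pdT χ x t y)
    (hσ : σ = fun x t y => -(u x t y * pdT χ x t y))
    (hζ : ζ = fun j x t y => b * (pdY j u x t y * χ x t y - u x t y * pdY j χ x t y)) :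
    ∀ x t y, pdT ρ x t y + pdX σ x t y + ∑ j : Fin n, pdY j (ζ j) x t y = 0 := by
  have chiVal : ∀ x t y, χ x t y = φ₀ x y + t * φ₁ x y := by
    intro x t y; rw [hχ]
  have chiT : ∀ x t y, pdT χ x t y = φ₁ x y := by
    intro x t y
    have h : HasDerivAt (fun s => χ x s y) (φ₁ x y) t := by
      simp only [hχ]
      simpa using ((hasDerivAt_id t).mul_const (φ₁ x y)).const_add (φ₀ x y)
    exact h.deriv
  have chiY : ∀ (j : Fin n) x t y,
      pdY j χ x t y = pdY2 j φ₀ x y + t * pdY2 j φ₁ x y := by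
    intro j x t y
    have h : HasDerivAt (fun s => χ x t (Function.update y j s))
        (pdY2 j φ₀ x y + t * pdY2 j φ₁ x y) (y j) := by
      simp only [hχ]
      exact (Aux.hasDerivAt_pdY2 hφ₀ j x y).add
        ((Aux.hasDerivAt_pdY2 hφ₁ j x y).const_mul t)
    exact h.deriv
  intro x t y
  -- derivative facts in t
  have hU : HasDerivAt (fun s => u x s y) (pdT u x t y) t := Aux.hasDerivAt_pdT hu x t y
  have hUx : HasDerivAt (fun s => pdX u x s y) (pdT (pdX u) x t y) t :=
    Aux.hasDerivAt_pdT (Aux.smooth3_pdX hu) x t y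
  have hUt : HasDerivAt (fun s => pdT u x s y) (pdT (pdT u) x t y) t :=
    Aux.hasDerivAt_pdT (Aux.smooth3_pdT hu) x t y
  have hUtt : HasDerivAt (fun s => pdT (pdT u) x s y) (pdT (pdT (pdT u)) x t y) t :=
    Aux.hasDerivAt_pdT (Aux.smooth3_pdT (Aux.smooth3_pdT hu)) x t y
  have hfu : HasDerivAt (fun s => f (u x s y)) (deriv f (u x t y) * pdT u x t y) t :=
    ((hf.differentiable (by simp) (u x t y)).hasDerivAt).comp t hU
  have hf'u : HasDerivAt (fun s => deriv f (u x s y))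
      (deriv (deriv f) (u x t y) * pdT u x t y) t :=
    by have h := (((Aux.contDiff_deriv hf).differentiable (by simp) (u x t y)).hasDerivAt).comp t hU; exact h
  have hχs : HasDerivAt (fun s => φ₀ x y + s * φ₁ x y) (φ₁ x y) t := by
    simpa using ((hasDerivAt_id t).mul_const (φ₁ x y)).const_add (φ₀ x y)
  have kρ : pdT ρ x t y =
      (pdT (pdX u) x t y + deriv (deriv f) (u x t y) * pdT u x t y * pdT u x t y
          + deriv f (u x t y) * pdT (pdT u) x t y + a * pdT (pdT (pdT u)) x t y)
        * (φ₀ x y + t * φ₁ x y)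
      + (pdX u x t y + deriv f (u x t y) * pdT u x t y + a * pdT (pdT u) x t y) * φ₁ x y
      - (a * pdT (pdT u) x t y + deriv f (u x t y) * pdT u x t y) * φ₁ x y := by
    have hfun : (fun s => ρ x s y) = (fun s =>
        (pdX u x s y + deriv f (u x s y) * pdT u x s y + a * pdT (pdT u) x s y)
          * (φ₀ x y + s * φ₁ x y)
        - (a * pdT u x s y + f (u x s y)) * φ₁ x y) := by
      funext s; simp only [hρ, chiVal, chiT]
    show deriv (fun s => ρ x s y) t = _
    rw [hfun]
    have h0 := (((hUx.add (hf'u.mul hUt)).add (hUtt.const_mul a)).mul hχs).sub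
      (((hUt.const_mul a).add hfu).mul_const (φ₁ x y))
    exact h0.deriv.trans (by simp only [Pi.add_apply, Pi.mul_apply]; ring)
  have kσ : pdX σ x t y = -(pdX u x t y * φ₁ x y + u x t y * pdX2 φ₁ x y) := by
    have hfun : (fun s => σ s t y) = (fun s => -(u s t y * φ₁ s y)) := by
      funext s; simp only [hσ, chiT]
    show deriv (fun s => σ s t y) x = _
    rw [hfun]
    have h0 := ((Aux.hasDerivAt_pdX hu x t y).mul (Aux.hasDerivAt_pdX2 hφ₁ x y)).neg
    exact h0.deriv.trans (by ring)
  have kz : ∀ j : Fin n, pdY j (ζ j) x t y =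
      b * (pdY j (pdY j u) x t y * (φ₀ x y + t * φ₁ x y)
        + pdY j u x t y * (pdY2 j φ₀ x y + t * pdY2 j φ₁ x y)
        - (pdY j u x t y * (pdY2 j φ₀ x y + t * pdY2 j φ₁ x y)
          + u x t y * (pdY2 j (pdY2 j φ₀) x y + t * pdY2 j (pdY2 j φ₁) x y))) := by
    intro j
    have hfun : (fun s => ζ j x t (Function.update y j s)) = (fun s =>
        b * (pdY j u x t (Function.update y j s)
            * (φ₀ x (Function.update y j s) + t * φ₁ x (Function.update y j s))
          - u x t (Function.update y j s)
            * (pdY2 j φ₀ x (Function.update y j s)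
              + t * pdY2 j φ₁ x (Function.update y j s)))) := by
      funext s; simp only [hζ, chiVal, chiY]
    show deriv (fun s => ζ j x t (Function.update y j s)) (y j) = _
    rw [hfun]
    have hA : HasDerivAt (fun s => pdY j u x t (Function.update y j s))
        (pdY j (pdY j u) x t y) (y j) := Aux.hasDerivAt_pdY (Aux.smooth3_pdY hu j) j x t y
    have hB : HasDerivAt
        (fun s => φ₀ x (Function.update y j s) + t * φ₁ x (Function.update y j s))
        (pdY2 j φ₀ x y + t * pdY2 j φ₁ x y) (y j) :=
      (Aux.hasDerivAt_pdY2 hφ₀ j x y).add ((Aux.hasDerivAt_pdY2 hφ₁ j x y).const_mul t)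
    have hC : HasDerivAt (fun s => u x t (Function.update y j s)) (pdY j u x t y) (y j) :=
      Aux.hasDerivAt_pdY hu j x t y
    have hD : HasDerivAt
        (fun s => pdY2 j φ₀ x (Function.update y j s)
          + t * pdY2 j φ₁ x (Function.update y j s))
        (pdY2 j (pdY2 j φ₀) x y + t * pdY2 j (pdY2 j φ₁) x y) (y j) :=
      (Aux.hasDerivAt_pdY2 (Aux.smooth2_pdY2 hφ₀ j) j x y).add
        ((Aux.hasDerivAt_pdY2 (Aux.smooth2_pdY2 hφ₁ j) j x y).const_mul t)
    have h0 := ((hA.mul hB).sub (hC.mul hD)).const_mul b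
    have h1 := h0.deriv
    simp only [Function.update_eq_self] at h1
    exact h1.trans (by ring)
  have hsum : (∑ j : Fin n, pdY j (ζ j) x t y) =
      b * lapY u x t y * (φ₀ x y + t * φ₁ x y)
        - b * u x t y * lapY2 φ₀ x y - b * (t * u x t y) * lapY2 φ₁ x y := by
    rw [Finset.sum_congr rfl (fun j _ => kz j)]
    simp only [lapY, lapY2, Finset.mul_sum, Finset.sum_mul, ← Finset.sum_sub_distrib]
    exact Finset.sum_congr rfl fun j _ => by ring
  rw [kρ, kσ, hsum]
  linear_combination (φ₀ x y + t * φ₁ x y) * hsol x t y - u x t y * h₀ x y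
    - b * t * u x t y * h₁ x y
end

section
/- Let b ≠ 0 and n = 1. For each k ∈ ℕ, the pair (φ₀, φ₁) with φ₁(x,y₁) = x^k and φ₀ = −k·x^{k−1}·y₁²/(2b) (with φ₀ = 0 when k = 0) satisfies the system (φ₁)_{y₁y₁} = 0, (φ₀)_{y₁y₁} = −(φ₁)_x / b, and these pairs for distinct k are linearly independent; hence the solution space of the system is infinite-dimensional. -/
/-- Partial derivative in the first (x) variable of a function of (x, y₁). -/
noncomputable def pX (F : ℝ → ℝ → ℝ) : ℝ → ℝ → ℝ :=
  fun x y => deriv (fun s => F s y) x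

/-- Partial derivative in the second (y₁) variable of a function of (x, y₁). -/
noncomputable def pY (F : ℝ → ℝ → ℝ) : ℝ → ℝ → ℝ :=
  fun x y => deriv (F x) y

/-- Smoothness of a function of two real variables. -/
def Sm (F : ℝ → ℝ → ℝ) : Prop :=
  ContDiff ℝ (⊤ : ℕ∞) (fun p : ℝ × ℝ => F p.1 p.2)

noncomputable def evalLM : Polynomial ℝ →ₗ[ℝ] (ℝ → ℝ) where
  toFun p := fun x => p.eval x
  map_add' p q := by ext x; simp
  map_smul' c p := by ext x; simp

lemma evalLM_inj : Function.Injective evalLM := by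
  intro p q h
  exact Polynomial.funext fun x => congrFun h x

lemma li_pow : LinearIndependent ℝ (fun k : ℕ => fun x : ℝ => x ^ k) := by
  have h : LinearIndependent ℝ (fun k : ℕ => (Polynomial.X ^ k : Polynomial ℝ)) := by
    have := (Polynomial.basisMonomials ℝ).linearIndependent
    simpa [Polynomial.X_pow_eq_monomial] using this
  have := h.map' evalLM (LinearMap.ker_eq_bot.mpr evalLM_inj)
  convert this using 2 with k
  ext x
  simp [evalLM]
  all_goals rfl

noncomputable def sndEval : ((ℝ → ℝ → ℝ) × (ℝ → ℝ → ℝ)) →ₗ[ℝ] (ℝ → ℝ) where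
  toFun F := fun x => F.2 x 1
  map_add' F G := by ext x; simp
  map_smul' c F := by ext x; simp

theorem stmt_14 (b : ℝ) (hb : b ≠ 0)
    (P : ℕ → (ℝ → ℝ → ℝ) × (ℝ → ℝ → ℝ))
    (hP : ∀ k : ℕ, P k =
      (fun x y => -(k : ℝ) * x ^ (k - 1) * y ^ 2 / (2 * b), fun x y => x ^ k)) :
    (∀ k, (∀ x y, pY (pY (P k).2) x y = 0) ∧
      (∀ x y, pY (pY (P k).1) x y = -(pX (P k).2 x y) / b)) ∧
    LinearIndependent ℝ P := by
  constructor
  · intro k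
    rw [hP k]
    constructor
    · intro x y
      change deriv (fun y' : ℝ => deriv (fun _ : ℝ => x ^ k) y') y = 0
      simp
    · intro x y
      change deriv (fun y' : ℝ => deriv (fun y : ℝ => -(k : ℝ) * x ^ (k - 1) * y ^ 2 / (2 * b)) y') y = -(deriv (fun s : ℝ => s ^ k) x) / b
      have h1 : (fun y : ℝ => -(k : ℝ) * x ^ (k - 1) * y ^ 2 / (2 * b))
          = fun y : ℝ => (-(k : ℝ) * x ^ (k - 1) / (2 * b)) * y ^ 2 := by
        ext y; ring
      rw [h1]
      have h2 : ∀ y : ℝ, deriv (fun y : ℝ => (-(k : ℝ) * x ^ (k - 1) / (2 * b)) * y ^ 2) y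
          = (-(k : ℝ) * x ^ (k - 1) / (2 * b)) * (2 * y) := by
        intro y
        rw [deriv_const_mul _ (by fun_prop)]
        simp [mul_comm]
      simp only [h2]
      rw [deriv_const_mul _ (by fun_prop), deriv_const_mul _ (by fun_prop)]
      simp
      field_simp
  · apply LinearIndependent.of_comp sndEval
    have : (sndEval ∘ P) = fun k : ℕ => fun x : ℝ => x ^ k := by
      ext k x
      simp [sndEval, hP k]
    rw [this]
    exact li_pow
end
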